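/- arXiv:2512.16514 — 7 statements merged into one kernel-verified Lean document; each statement's English description precedes it below -/
import Mathlib

section
/- Let σ be a stake vector with Nakamoto coefficient k = d(σ), witnessed by coalition C of size k containing player i, and suppose every size-k coalition avoiding i has total stake ≤ τ·Σ_{j≠i} σ_j. Then every player ℓ ∉ C satisfies σ_ℓ < (1−τ)·σ_i. -/
/-! Exchanging `i` for `ℓ` in the winning coalition `C` gives a size-`k` coalition avoiding `i`,
of stake `σ ℓ + (∑_C σ - σ i)`. By hypothesis this is at most `τ (∑ σ - σ i)`, while
`∑_C σ > τ ∑ σ`; subtracting the two inequalities leaves `σ ℓ < (1 - τ) σ i`. -/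

open Finset

/-- Nakamoto coefficient of the stake profile `σ` restricted to the player set `N`,
with threshold `τ`: the minimum size of a coalition `C ⊆ N` whose total stake strictly
exceeds `τ` times the total stake of `N`. -/
noncomputable def nakamoto {n : ℕ} (σ : Fin n → ℝ) (N : Finset (Fin n)) (τ : ℝ) : ℕ :=
  sInf {k : ℕ | ∃ C ⊆ N, C.card = k ∧ τ * ∑ j ∈ N, σ j < ∑ j ∈ C, σ j}

namespace Finset

variable {α : Type*} [DecidableEq α] {s : Finset α} {i ℓ : α}

theorem card_insert_erase_of_notMem (hi : i ∈ s) (hℓ : ℓ ∉ s) :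
    (insert ℓ (s.erase i)).card = s.card := by
  rw [card_insert_of_notMem fun h => hℓ (mem_of_mem_erase h), card_erase_add_one hi]

theorem sum_insert_erase_of_notMem {M : Type*} [AddCommGroup M] (f : α → M)
    (hi : i ∈ s) (hℓ : ℓ ∉ s) :
    ∑ j ∈ insert ℓ (s.erase i), f j = f ℓ + (∑ j ∈ s, f j - f i) := by
  rw [sum_insert fun h => hℓ (mem_of_mem_erase h), sum_erase_eq_sub hi]

end Finset

theorem stmt2_general {n : ℕ} (σ : Fin n → ℝ) (τ : ℝ) (k : ℕ)
    (C : Finset (Fin n)) (hC : C.card = k) (i : Fin n) (hiC : i ∈ C)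
    (hwit : τ * ∑ j, σ j < ∑ j ∈ C, σ j)
    (havoid : ∀ C' : Finset (Fin n), C' ⊆ Finset.univ.erase i → C'.card = k →
      ∑ j ∈ C', σ j ≤ τ * ∑ j ∈ Finset.univ.erase i, σ j) :
    ∀ ℓ : Fin n, ℓ ∉ C → σ ℓ < (1 - τ) * σ i := by
  intro ℓ hℓ
  have hℓi : ℓ ≠ i := by rintro rfl; exact hℓ hiC
  have hswap_avoids : insert ℓ (C.erase i) ⊆ univ.erase i :=
    subset_erase.2 ⟨subset_univ _, by simp [hℓi.symm]⟩
  have hswap := havoid _ hswap_avoids (by rw [card_insert_erase_of_notMem hiC hℓ, hC])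
  rw [sum_insert_erase_of_notMem σ hiC hℓ, sum_erase_eq_sub (mem_univ i)] at hswap
  linarith

theorem stmt2 {n : ℕ} (σ : Fin n → ℝ) (τ : ℝ) (hτ0 : 0 < τ) (hτ1 : τ < 1)
    (hσ : ∀ i, 0 ≤ σ i) (k : ℕ) (hk : nakamoto σ Finset.univ τ = k)
    (C : Finset (Fin n)) (hC : C.card = k) (i : Fin n) (hiC : i ∈ C)
    (hwit : τ * ∑ j, σ j < ∑ j ∈ C, σ j)
    (havoid : ∀ C' : Finset (Fin n), C' ⊆ Finset.univ.erase i → C'.card = k →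
      ∑ j ∈ C', σ j ≤ τ * ∑ j ∈ Finset.univ.erase i, σ j) :
    ∀ ℓ : Fin n, ℓ ∉ C → σ ℓ < (1 - τ) * σ i :=
  stmt2_general σ τ k C hC i hiC hwit havoid
end

section
/- Define the virtual-stake dynamics: for each player i, type τ_i ≥ 0 and stake σ_i^t ≥ 0, with virtual stake p_i^t = α·τ_i + (1−α)·σ_i^t for fixed α ∈ [0,1], total W^t = Σ_i p_i^t (assumed positive), and selection weight w_i^t = p_i^t / W^t. At each round exactly one unit of stake is distributed in proportion: σ_i^{t+1} = σ_i^t + w_i^t. Then for all t ≥ 1: (i) the total stake satisfies S^t = S^1 + (t−1); (ii) the total virtual stake satisfies W^t = W^1 + (t−1)(1−α); and (iii) the selection weights are invariant: w_i^t = w_i^1 for every player i. -/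
open Finset

theorem stmt3 {n : ℕ} (α : ℝ) (hα0 : 0 ≤ α) (hα1 : α ≤ 1)
    (τ : Fin n → ℝ) (hτ : ∀ i, 0 ≤ τ i)
    (σ : ℕ → Fin n → ℝ) (hσ : ∀ t, 1 ≤ t → ∀ i, 0 ≤ σ t i)
    (W : ℕ → ℝ) (hW : ∀ t, W t = ∑ i, (α * τ i + (1 - α) * σ t i))
    (hWpos : ∀ t, 1 ≤ t → 0 < W t)
    (hupd : ∀ t, 1 ≤ t → ∀ i,
      σ (t + 1) i = σ t i + (α * τ i + (1 - α) * σ t i) / W t) :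
    ∀ t, 1 ≤ t →
      ((∑ i, σ t i) = (∑ i, σ 1 i) + ((t : ℝ) - 1)) ∧
      (W t = W 1 + ((t : ℝ) - 1) * (1 - α)) ∧
      (∀ i, (α * τ i + (1 - α) * σ t i) / W t
          = (α * τ i + (1 - α) * σ 1 i) / W 1) := by
  intro t ht
  induction t, ht using Nat.le_induction with
  | base => simp
  | succ t ht ih =>
    obtain ⟨hS, hWt, hw⟩ := ih
    have hWne : W t ≠ 0 := (hWpos t ht).ne'
    -- total stake
    have hsum : (∑ i, σ (t + 1) i) = (∑ i, σ t i) + 1 := by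
      have : (∑ i, σ (t + 1) i)
          = (∑ i, σ t i) + (∑ i, (α * τ i + (1 - α) * σ t i)) / W t := by
        rw [Finset.sum_div, ← Finset.sum_add_distrib]
        exact Finset.sum_congr rfl fun i _ => hupd t ht i
      rw [this, ← hW t, div_self hWne]
    -- W update
    have hWsucc : W (t + 1) = W t + (1 - α) := by
      have h1 : W (t + 1) = ∑ i, (α * τ i + (1 - α) *
          (σ t i + (α * τ i + (1 - α) * σ t i) / W t)) := by
        rw [hW (t + 1)]
        exact Finset.sum_congr rfl fun i _ => by rw [hupd t ht i]
      have h2 : ∀ i : Fin n, α * τ i + (1 - α) *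
          (σ t i + (α * τ i + (1 - α) * σ t i) / W t)
          = (α * τ i + (1 - α) * σ t i) * (1 + (1 - α) / W t) := by
        intro i; field_simp; ring
      rw [h1]
      simp_rw [h2]
      rw [← Finset.sum_mul, ← hW t]
      field_simp
    have hWsuccne : W (t + 1) ≠ 0 := (hWpos (t + 1) (by omega)).ne'
    refine ⟨?_, ?_, ?_⟩
    · rw [hsum, hS]; push_cast; ring
    · rw [hWsucc, hWt]; push_cast; ring
    · intro i
      rw [← hw i]
      have hp : α * τ i + (1 - α) * σ (t + 1) i
          = (α * τ i + (1 - α) * σ t i) * (1 + (1 - α) / W t) := by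
        rw [hupd t ht i]; field_simp; ring
      have hWfac : W (t + 1) = W t * (1 + (1 - α) / W t) := by
        rw [hWsucc]; field_simp
      rw [hp, hWfac, mul_div_mul_right _ _ ?_]
      intro h
      rw [hWfac, h, mul_zero] at hWsuccne
      exact hWsuccne rfl
end

section
/- Under the virtual-stake dynamics with update σ_i^{t+1} = σ_i^t + w_i^t where w_i^t = p_i^t/W^t, p_i^t = α·τ_i + (1−α)·σ_i^t, W^t = Σ_i p_i^t > 0, the virtual stake evolves as p_i^{t+1} = p_i^t·(1 + (1−α)/W^t), and hence the ratio p_i^t / W^t is constant in t. -/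
open Finset

theorem stmt4 {n : ℕ} (α : ℝ) (hα0 : 0 ≤ α) (hα1 : α ≤ 1)
    (τ : Fin n → ℝ) (hτ : ∀ i, 0 ≤ τ i)
    (σ : ℕ → Fin n → ℝ) (hσ : ∀ t, 1 ≤ t → ∀ i, 0 ≤ σ t i)
    (W : ℕ → ℝ) (hW : ∀ t, W t = ∑ i, (α * τ i + (1 - α) * σ t i))
    (hWpos : ∀ t, 1 ≤ t → 0 < W t)
    (hupd : ∀ t, 1 ≤ t → ∀ i,
      σ (t + 1) i = σ t i + (α * τ i + (1 - α) * σ t i) / W t) :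
    (∀ t, 1 ≤ t → ∀ i,
      α * τ i + (1 - α) * σ (t + 1) i
        = (α * τ i + (1 - α) * σ t i) * (1 + (1 - α) / W t)) ∧
    (∀ t, 1 ≤ t → ∀ i,
      (α * τ i + (1 - α) * σ t i) / W t
        = (α * τ i + (1 - α) * σ 1 i) / W 1) := by
  have key : ∀ t, 1 ≤ t → ∀ i,
      α * τ i + (1 - α) * σ (t + 1) i
        = (α * τ i + (1 - α) * σ t i) * (1 + (1 - α) / W t) := by
    intro t ht i
    have hne := (hWpos t ht).ne'
    rw [hupd t ht i]
    field_simp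
    ring
  refine ⟨key, ?_⟩
  have hWstep : ∀ t, 1 ≤ t → W (t + 1) = W t * (1 + (1 - α) / W t) := by
    intro t ht
    rw [hW (t + 1), Finset.sum_congr rfl fun i _ => key t ht i,
      ← Finset.sum_mul, ← hW t]
  intro t ht i
  induction t with
  | zero => omega
  | succ s ih =>
    rcases Nat.eq_or_lt_of_le ht with h | h
    · simp [← h]
    · have hs : 1 ≤ s := by omega
      have hpos : 0 < 1 + (1 - α) / W s := by
        have := div_nonneg (by linarith : (0:ℝ) ≤ 1 - α) (hWpos s hs).le
        linarith
      rw [key s hs i, hWstep s hs,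
        mul_div_mul_right _ _ hpos.ne']
      exact ih hs
end

section
/- In the virtual-stake model with α ∈ (0,1), let i* be the player with the largest type τ_{i*} and suppose player i ≠ i* has initial stake σ_i^1 ≥ α·(τ_{i*} − τ_i)/(1−α) + M for some M > 0, while σ_{i*}^1 = 1. Then player i's invariant selection weight exceeds that of i*: w_i^1 − w_{i*}^1 ≥ (1−α)·(M−1)/W^1; in particular if M > 1 then the long-run stake share of i strictly exceeds that of i*, i.e., initial stake inequality persists despite the type advantage of i*. -/
open Finset

theorem stmt6 {n : ℕ} (α : ℝ) (hα0 : 0 < α) (hα1 : α < 1)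
    (τ : Fin n → ℝ) (hτ : ∀ j, 0 ≤ τ j)
    (σ1 : Fin n → ℝ) (hσ1 : ∀ j, 0 ≤ σ1 j)
    (W1 : ℝ) (hW1 : W1 = ∑ j, (α * τ j + (1 - α) * σ1 j)) (hWpos : 0 < W1)
    (istar i : Fin n) (hne : i ≠ istar) (hmax : ∀ j, τ j ≤ τ istar)
    (M : ℝ) (hM : 0 < M)
    (hi : σ1 i ≥ α * (τ istar - τ i) / (1 - α) + M)
    (histar : σ1 istar = 1) :
    ((α * τ i + (1 - α) * σ1 i) / W1 - (α * τ istar + (1 - α) * σ1 istar) / W1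
        ≥ (1 - α) * (M - 1) / W1) ∧
    (1 < M →
      (α * τ istar + (1 - α) * σ1 istar) / W1 < (α * τ i + (1 - α) * σ1 i) / W1) := by
  have h1α : (0:ℝ) < 1 - α := by linarith
  have key : (1 - α) * σ1 i ≥ α * (τ istar - τ i) + (1 - α) * M := by
    have := mul_le_mul_of_nonneg_left hi (le_of_lt h1α)
    calc (1-α) * σ1 i ≥ (1-α) * (α * (τ istar - τ i) / (1 - α) + M) := this
      _ = α * (τ istar - τ i) + (1 - α) * M := by field_simp
  have hnum : (α * τ i + (1 - α) * σ1 i) - (α * τ istar + (1 - α) * σ1 istar)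
      ≥ (1 - α) * (M - 1) := by rw [histar]; nlinarith
  constructor
  · rw [div_sub_div_same, ge_iff_le, div_le_div_iff₀ hWpos hWpos]
    nlinarith
  · intro hM1
    exact div_lt_div_of_pos_right (by nlinarith) hWpos
end

section
/- In the virtual-stake dynamics with α ∈ [0,1] and per-round unit budget distributed proportionally to virtual stake, the stake share of player i converges: σ_i^t / S^t → w_i^1 as t → ∞, where S^t = Σ_j σ_j^t and w_i^1 = (α·τ_i + (1−α)·σ_i^1) / Σ_j (α·τ_j + (1−α)·σ_j^1). -/
/-!
Write `p_j^t = α τ_j + (1 - α) σ_j^t` and `w_j = p_j^1 / W^1`. The profile `p^t` stays proportional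
to `w`: if `p^t = W^t w`, every player gains exactly `w_j` in round `t`, so `p^{t+1} = p^t + (1 - α) w`,
which is again a multiple of `w` because `∑ w = 1`. Hence `σ_i^{t+1} = σ_i^1 + t w_i` and
`S^{t+1} = S^1 + t`, and the share `(σ_i^1 + t w_i) / (S^1 + t)` tends to `w_i`.
-/

open Finset Filter

section VirtualStake

variable {ι : Type*}

def virtualStake (α : ℝ) (τ s : ι → ℝ) (j : ι) : ℝ := α * τ j + (1 - α) * s j

lemma virtualStake_add (α : ℝ) (τ s d : ι → ℝ) (j : ι) :
    virtualStake α τ (s + d) j = virtualStake α τ s j + (1 - α) * d j := by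
  simp only [virtualStake, Pi.add_apply]
  ring

variable [Fintype ι] (α : ℝ) (τ : ι → ℝ) (σ : ℕ → ι → ℝ) (W : ℕ → ℝ)

lemma sum_virtualStake_div (hW : ∀ t, W t = ∑ j, virtualStake α τ (σ t) j) (hW1 : W 1 ≠ 0) :
    ∑ j, virtualStake α τ (σ 1) j / W 1 = 1 := by
  rw [← sum_div, ← hW, div_self hW1]

lemma virtualStake_eq_mul (hW : ∀ t, W t = ∑ j, virtualStake α τ (σ t) j)
    (hW0 : ∀ t, 1 ≤ t → W t ≠ 0)
    (hupd : ∀ t, 1 ≤ t → ∀ j, σ (t + 1) j = σ t j + virtualStake α τ (σ t) j / W t) :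
    ∀ t, 1 ≤ t → ∀ j, virtualStake α τ (σ t) j = virtualStake α τ (σ 1) j / W 1 * W t := by
  set w : ι → ℝ := fun j => virtualStake α τ (σ 1) j / W 1
  have hw : ∑ j, w j = 1 := sum_virtualStake_div α τ σ W hW (hW0 1 le_rfl)
  intro t ht
  induction t, ht using Nat.le_induction with
  | base => exact fun j => (div_mul_cancel₀ _ (hW0 1 le_rfl)).symm
  | succ t ht ih =>
    have hstep : σ (t + 1) = σ t + w := funext fun j => by
      rw [hupd t ht j, ih j, mul_div_cancel_right₀ _ (hW0 t ht)]
      rfl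
    have hp : ∀ j, virtualStake α τ (σ (t + 1)) j = w j * (W t + (1 - α)) := fun j => by
      rw [hstep, virtualStake_add, ih j]
      ring
    have hWsucc : W (t + 1) = W t + (1 - α) := by
      rw [hW, sum_congr rfl fun j _ => hp j, ← sum_mul, hw, one_mul]
    intro j
    rw [hp j, hWsucc]

lemma stake_succ_eq (hW : ∀ t, W t = ∑ j, virtualStake α τ (σ t) j)
    (hW0 : ∀ t, 1 ≤ t → W t ≠ 0)
    (hupd : ∀ t, 1 ≤ t → ∀ j, σ (t + 1) j = σ t j + virtualStake α τ (σ t) j / W t)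
    (t : ℕ) (j : ι) : σ (t + 1) j = σ 1 j + t * (virtualStake α τ (σ 1) j / W 1) := by
  induction t with
  | zero => simp
  | succ t ih =>
    have ht : 1 ≤ t + 1 := Nat.le_add_left 1 t
    rw [hupd (t + 1) ht j, ih, virtualStake_eq_mul α τ σ W hW hW0 hupd (t + 1) ht j,
      mul_div_cancel_right₀ _ (hW0 (t + 1) ht)]
    push_cast
    ring

lemma sum_stake_succ_eq (hW : ∀ t, W t = ∑ j, virtualStake α τ (σ t) j)
    (hW0 : ∀ t, 1 ≤ t → W t ≠ 0)
    (hupd : ∀ t, 1 ≤ t → ∀ j, σ (t + 1) j = σ t j + virtualStake α τ (σ t) j / W t)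
    (t : ℕ) : ∑ j, σ (t + 1) j = ∑ j, σ 1 j + t := by
  simp only [stake_succ_eq α τ σ W hW hW0 hupd t, sum_add_distrib, ← mul_sum,
    sum_virtualStake_div α τ σ W hW (hW0 1 le_rfl), mul_one]

end VirtualStake

theorem stmt12_general {n : ℕ} (α : ℝ)
    (τ : Fin n → ℝ)
    (σ : ℕ → Fin n → ℝ)
    (W : ℕ → ℝ) (hW : ∀ t, W t = ∑ i, (α * τ i + (1 - α) * σ t i))
    (hWpos : ∀ t, 1 ≤ t → 0 < W t)
    (hupd : ∀ t, 1 ≤ t → ∀ i,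
      σ (t + 1) i = σ t i + (α * τ i + (1 - α) * σ t i) / W t) :
    ∀ i : Fin n,
      Tendsto (fun t : ℕ => σ t i / ∑ j, σ t j) atTop
        (nhds ((α * τ i + (1 - α) * σ 1 i) / W 1)) := by
  intro i
  have hW0 : ∀ t, 1 ≤ t → W t ≠ 0 := fun t ht => (hWpos t ht).ne'
  rw [← tendsto_add_atTop_iff_nat 1]
  have hshare : ∀ t : ℕ, σ (t + 1) i / ∑ j, σ (t + 1) j
      = (σ 1 i + virtualStake α τ (σ 1) i / W 1 * t) / (∑ j, σ 1 j + 1 * t) := fun t => by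
    rw [stake_succ_eq α τ σ W hW hW0 hupd, sum_stake_succ_eq α τ σ W hW hW0 hupd, mul_comm,
      one_mul]
  have hlim := tendsto_add_mul_div_add_mul_atTop_nhds (σ 1 i) (∑ j, σ 1 j)
    (virtualStake α τ (σ 1) i / W 1) one_ne_zero
  rw [div_one] at hlim
  exact hlim.congr fun t => (hshare t).symm

theorem stmt12 {n : ℕ} (α : ℝ) (hα0 : 0 ≤ α) (hα1 : α ≤ 1)
    (τ : Fin n → ℝ) (hτ : ∀ i, 0 ≤ τ i)
    (σ : ℕ → Fin n → ℝ) (hσ : ∀ t, 1 ≤ t → ∀ i, 0 ≤ σ t i)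
    (W : ℕ → ℝ) (hW : ∀ t, W t = ∑ i, (α * τ i + (1 - α) * σ t i))
    (hWpos : ∀ t, 1 ≤ t → 0 < W t)
    (hupd : ∀ t, 1 ≤ t → ∀ i,
      σ (t + 1) i = σ t i + (α * τ i + (1 - α) * σ t i) / W t) :
    ∀ i : Fin n,
      Tendsto (fun t : ℕ => σ t i / ∑ j, σ t j) atTop
        (nhds ((α * τ i + (1 - α) * σ 1 i) / W 1)) :=
  stmt12_general α τ σ W hW hWpos hupd
end

section
/- Let τ ∈ (0,1) and let σ be a stake vector. If player i belongs to every minimum-size coalition C witnessing d(σ) = k and some player ℓ ∉ C has σ_ℓ ≥ (1−τ)·σ_i, then there exists a size-k coalition avoiding i with total stake exceeding τ·Σ_{j≠i} σ_j; equivalently, d(σ_{-i}) ≤ k. -/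
open Finset

/- Swapping `i ∈ C` for `ℓ ∉ C` loses `σ i` from the coalition but gains `σ ℓ ≥ (1 - τ) σ i`,
while the threshold drops by `τ σ i`; so a winning coalition stays winning after `i` leaves
the player set. -/

section Swap

variable {α : Type*} [DecidableEq α] {C N : Finset α} {i ℓ : α}

theorem Finset.card_insert_erase_of_notMem_s14 (hi : i ∈ C) (hℓ : ℓ ∉ C) :
    (insert ℓ (C.erase i)).card = C.card := by
  rw [card_insert_of_notMem fun h => hℓ (mem_of_mem_erase h), card_erase_add_one hi]

theorem Finset.insert_erase_subset_erase (hC : C ⊆ N) (hℓN : ℓ ∈ N) (hi : i ∈ C)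
    (hℓ : ℓ ∉ C) : insert ℓ (C.erase i) ⊆ N.erase i := by
  refine insert_subset (mem_erase.2 ⟨fun h => hℓ (h ▸ hi), hℓN⟩) ?_
  exact erase_subset_erase i hC

theorem Finset.sum_insert_erase_of_notMem_s14 (σ : α → ℝ) (hi : i ∈ C) (hℓ : ℓ ∉ C) :
    ∑ j ∈ insert ℓ (C.erase i), σ j = ∑ j ∈ C, σ j - σ i + σ ℓ := by
  rw [sum_insert fun h => hℓ (mem_of_mem_erase h), sum_erase_eq_sub hi, add_comm]

theorem threshold_lt_sum_insert_erase {σ : α → ℝ} {τ : ℝ} (hiN : i ∈ N) (hi : i ∈ C)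
    (hℓ : ℓ ∉ C) (hwin : τ * ∑ j ∈ N, σ j < ∑ j ∈ C, σ j) (hσℓ : (1 - τ) * σ i ≤ σ ℓ) :
    τ * ∑ j ∈ N.erase i, σ j < ∑ j ∈ insert ℓ (C.erase i), σ j := by
  rw [sum_erase_eq_sub hiN, sum_insert_erase_of_notMem_s14 σ hi hℓ]
  linarith

end Swap

theorem nakamoto_le_card {n : ℕ} {σ : Fin n → ℝ} {N C : Finset (Fin n)} {τ : ℝ} (hC : C ⊆ N)
    (hwin : τ * ∑ j ∈ N, σ j < ∑ j ∈ C, σ j) : nakamoto σ N τ ≤ C.card :=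
  Nat.sInf_le ⟨C, hC, rfl, hwin⟩

theorem stmt14_general {n : ℕ} (τ : ℝ)
    (σ : Fin n → ℝ) (k : ℕ)
    (C : Finset (Fin n)) (hC : C.card = k)
    (hwit : τ * ∑ j, σ j < ∑ j ∈ C, σ j)
    (i : Fin n) (hiC : i ∈ C)
    (ℓ : Fin n) (hℓC : ℓ ∉ C) (hℓ : σ ℓ ≥ (1 - τ) * σ i) :
    (∃ C' : Finset (Fin n), C' ⊆ Finset.univ.erase i ∧ C'.card = k ∧
        τ * ∑ j ∈ Finset.univ.erase i, σ j < ∑ j ∈ C', σ j) ∧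
    nakamoto σ (Finset.univ.erase i) τ ≤ k := by
  have hsub := insert_erase_subset_erase (subset_univ C) (mem_univ ℓ) hiC hℓC
  have hcard : (insert ℓ (C.erase i)).card = k := hC ▸ card_insert_erase_of_notMem_s14 hiC hℓC
  have hwin := threshold_lt_sum_insert_erase (mem_univ i) hiC hℓC hwit hℓ
  exact ⟨⟨_, hsub, hcard, hwin⟩, hcard ▸ nakamoto_le_card hsub hwin⟩

theorem stmt14 {n : ℕ} (τ : ℝ) (hτ0 : 0 < τ) (hτ1 : τ < 1)
    (σ : Fin n → ℝ) (hσ : ∀ i, 0 ≤ σ i) (k : ℕ)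
    (C : Finset (Fin n)) (hC : C.card = k)
    (hwit : τ * ∑ j, σ j < ∑ j ∈ C, σ j)
    (i : Fin n) (hiC : i ∈ C)
    (ℓ : Fin n) (hℓC : ℓ ∉ C) (hℓ : σ ℓ ≥ (1 - τ) * σ i) :
    (∃ C' : Finset (Fin n), C' ⊆ Finset.univ.erase i ∧ C'.card = k ∧
        τ * ∑ j ∈ Finset.univ.erase i, σ j < ∑ j ∈ C', σ j) ∧
    nakamoto σ (Finset.univ.erase i) τ ≤ k :=
  stmt14_general τ σ k C hC hwit i hiC ℓ hℓC hℓ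
end

section
/- Suppose an all-pay policy evenly splits a per-round budget β > 0 among all participants and all n players always participate, each receiving β/n per round. Then the Nakamoto coefficient with threshold τ never decreases over time: d(σ^{t+1}) ≥ d(σ^t) for all t. -/
open Finset

/-!
Let `k` be the Nakamoto coefficient after the update, witnessed by a coalition `C` of size `k`,
and write `S` for the total stake before it and `c = β / n`. The condition on `C` reads
`τ (S + n c) < ∑_C σ + k c`. If `k ≤ τ n`, the same coalition already exceeds `τ S`. If
`k > τ n`, averaging gives a coalition of size `k` holding at least `k / n > τ` of `S`.
Either way a coalition of size `k` beats the threshold before the update.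
-/

theorem exists_subset_card_eq_mul_sum_le {ι : Type*} [DecidableEq ι] (f : ι → ℝ)
    {N : Finset ι} {k : ℕ} (hk : k ≤ #N) :
    ∃ C ⊆ N, #C = k ∧ k * ∑ i ∈ N, f i ≤ #N * ∑ i ∈ C, f i := by
  induction N using Finset.strongInduction with
  | H N ih =>
    rcases hk.eq_or_lt with rfl | hlt
    · exact ⟨N, subset_rfl, rfl, le_rfl⟩
    rcases Nat.eq_zero_or_pos k with rfl | hk0
    · exact ⟨∅, empty_subset _, card_empty, by simp⟩
    -- Discard a smallest entry: it lies below the average, so the average cannot drop.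
    obtain ⟨y, hy, hmin⟩ := N.exists_min_image f (card_pos.mp (hk0.trans hlt))
    have hy_le : #N * f y ≤ ∑ i ∈ N, f i := by
      simpa using card_nsmul_le_sum N f (f y) hmin
    have hcard : #(N.erase y) = #N - 1 := card_erase_of_mem hy
    obtain ⟨C, hCsub, hCk, hC⟩ := ih _ (erase_ssubset hy) (by omega)
    refine ⟨C, hCsub.trans (erase_subset y N), hCk, ?_⟩
    rw [sum_erase_eq_sub hy, hcard, Nat.cast_sub (by omega), Nat.cast_one] at hC
    have hm : (k : ℝ) + 1 ≤ #N := by exact_mod_cast hlt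
    have hk1 : (1 : ℝ) ≤ k := by exact_mod_cast hk0
    have key : ((#N : ℝ) - 1) * (k * ∑ i ∈ N, f i) ≤
        ((#N : ℝ) - 1) * (#N * ∑ i ∈ C, f i) := by
      nlinarith [mul_le_mul_of_nonneg_left hC (by positivity : (0 : ℝ) ≤ #N),
        mul_le_mul_of_nonneg_left hy_le (by positivity : (0 : ℝ) ≤ k)]
    exact le_of_mul_le_mul_left key (by linarith)

theorem exists_card_eq_lt_sum_of_lt_sum_add_const {ι : Type*} [Fintype ι] {σ : ι → ℝ}
    {c τ : ℝ} (hc : 0 ≤ c) (hS : 0 < ∑ i, σ i) {C : Finset ι}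
    (hC : τ * ∑ i, (σ i + c) < ∑ i ∈ C, (σ i + c)) :
    ∃ C' : Finset ι, #C' = #C ∧ τ * ∑ i, σ i < ∑ i ∈ C', σ i := by
  simp only [sum_add_distrib, sum_const, nsmul_eq_mul, card_univ] at hC
  by_cases hsmall : (#C : ℝ) ≤ τ * Fintype.card ι
  · exact ⟨C, rfl, by nlinarith [mul_le_mul_of_nonneg_right hsmall hc]⟩
  · classical
    push Not at hsmall
    obtain ⟨C', -, hC'k, hC'⟩ :=
      exists_subset_card_eq_mul_sum_le σ (N := univ) (card_le_univ C)
    rw [card_univ] at hC'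
    have hn : (0 : ℝ) < Fintype.card ι := by
      exact_mod_cast card_pos.mpr (nonempty_of_sum_ne_zero hS.ne')
    refine ⟨C', hC'k, lt_of_mul_lt_mul_left ?_ hn.le⟩
    calc (Fintype.card ι : ℝ) * (τ * ∑ i, σ i)
        = τ * Fintype.card ι * ∑ i, σ i := by ring
      _ < #C * ∑ i, σ i := mul_lt_mul_of_pos_right hsmall hS
      _ ≤ _ := hC'

theorem nakamoto_le_nakamoto_add_const {n : ℕ} {σ : Fin n → ℝ} {c τ : ℝ}
    (hσ : ∀ i, 0 ≤ σ i) (hc : 0 ≤ c) (hτ : τ < 1) :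
    nakamoto σ univ τ ≤ nakamoto (fun i => σ i + c) univ τ := by
  rcases (sum_nonneg fun i _ => hσ i : 0 ≤ ∑ i, σ i).eq_or_lt with hS | hS
  · have hzero : nakamoto σ univ τ = 0 := by
      refine Nat.sInf_eq_zero.mpr (Or.inr (Set.eq_empty_of_forall_notMem ?_))
      rintro k ⟨C, -, -, hC⟩
      have := sum_le_sum_of_subset_of_nonneg (subset_univ C) fun i _ _ => hσ i
      rw [← hS] at hC this
      linarith
    exact hzero ▸ Nat.zero_le _
  · have hne : {k : ℕ | ∃ C ⊆ univ, #C = k ∧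
        τ * ∑ i, (σ i + c) < ∑ i ∈ C, (σ i + c)}.Nonempty := by
      refine ⟨_, univ, subset_rfl, rfl, mul_lt_of_lt_one_left ?_ hτ⟩
      exact hS.trans_le (sum_le_sum fun i _ => le_add_of_nonneg_right hc)
    obtain ⟨C, -, hCk, hC⟩ := Nat.sInf_mem hne
    obtain ⟨C', hC'k, hC'⟩ := exists_card_eq_lt_sum_of_lt_sum_add_const hc hS hC
    exact Nat.sInf_le ⟨C', subset_univ _, hC'k.trans hCk, hC'⟩

theorem stmt16_general {n : ℕ} (τ : ℝ) (hτ1 : τ < 1)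
    (β : ℝ) (hβ : 0 < β)
    (σ : ℕ → Fin n → ℝ) (hσ0 : ∀ i, 0 ≤ σ 0 i)
    (hupd : ∀ t i, σ (t + 1) i = σ t i + β / n) :
    ∀ t : ℕ, nakamoto (σ t) Finset.univ τ ≤ nakamoto (σ (t + 1)) Finset.univ τ := by
  have hshare : 0 ≤ β / n := div_nonneg hβ.le n.cast_nonneg
  have hnonneg : ∀ t i, 0 ≤ σ t i := by
    intro t
    induction t with
    | zero => exact hσ0
    | succ t ih => exact fun i => (hupd t i).symm ▸ add_nonneg (ih i) hshare
  intro t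
  rw [show σ (t + 1) = fun i => σ t i + β / n from funext (hupd t)]
  exact nakamoto_le_nakamoto_add_const (hnonneg t) hshare hτ1

theorem stmt16 {n : ℕ} (hn : 0 < n) (τ : ℝ) (hτ0 : 0 < τ) (hτ1 : τ < 1)
    (β : ℝ) (hβ : 0 < β)
    (σ : ℕ → Fin n → ℝ) (hσ0 : ∀ i, 0 ≤ σ 0 i)
    (hupd : ∀ t i, σ (t + 1) i = σ t i + β / n) :
    ∀ t : ℕ, nakamoto (σ t) Finset.univ τ ≤ nakamoto (σ (t + 1)) Finset.univ τ :=
  stmt16_general τ hτ1 β hβ σ hσ0 hupd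
end
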